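/- arXiv:1107.3668 — 4 statements merged into one kernel-verified Lean document; each statement's English description precedes it below -/
import Mathlib

section
/- If two metric trees with the same leaf set {1,...,n} (n ≥ 3), with strictly positive edge lengths and no vertices of degree 2, induce the same pairwise distance function on leaves, then they are isomorphic as metric trees (the 2-dissimilarity vector determines the tree). -/
/-! Every vertex of a metric tree without vertices of degree two is the median of three leaves,
and the distance from any vertex `x` to the median `m` of `a, b, c` is determined by the
distances among `x, a, b, c`: the median `p` of `a, b, x` is the projection of `x` onto the path
from `a` to `b`, on which `m` also lies, so `d(x, m) = d(x, p) + |d(a, m) - d(a, p)|`, and all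
three terms are Gromov products. Hence sending the median of three leaves in one tree to the
median of the same leaves in the other preserves all distances. Done in both directions this gives
injections both ways, hence a bijection; with positive edge lengths adjacency is the metric
condition that no third vertex lies between two vertices, and edge lengths are distances, so the
bijection is an isomorphism. -/

open SimpleGraph Finset

structure MetricTree (n : ℕ) where
  V : Type
  [fintypeV : Fintype V]
  [decEqV : DecidableEq V]
  G : SimpleGraph V
  isTree : G.IsTree
  leaf : Fin (n + 1) → V
  leaf_inj : Function.Injective leaf
  len : Sym2 V → ℝ
  len_nonneg : ∀ e, 0 ≤ len e

attribute [instance] MetricTree.fintypeV MetricTree.decEqV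

namespace MetricTree

variable {n : ℕ}

/-- The unique path between two vertices of the tree. -/
noncomputable def path (T : MetricTree n) (v w : T.V) : T.G.Walk v w :=
  (T.isTree.existsUnique_path v w).choose

open scoped Classical in
/-- The edges of the convex hull (minimal subtree) of a set of vertices. -/
noncomputable def hullEdges (T : MetricTree n) (S : Set T.V) : Finset (Sym2 T.V) :=
  Finset.univ.filter fun e => ∃ a ∈ S, ∃ b ∈ S, e ∈ (T.path a b).edges

/-- Total length of the convex hull of a set of vertices. -/
noncomputable def steiner (T : MetricTree n) (S : Set T.V) : ℝ :=
  ∑ e ∈ T.hullEdges S, T.len e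

/-- Path distance between two vertices. -/
noncomputable def dist (T : MetricTree n) (a b : T.V) : ℝ := T.steiner {a, b}

/-- Rooted Steiner tree length `d_{0,σ}` for a set `σ ⊆ {1,…,n}` of leaf labels. -/
noncomputable def d0 (T : MetricTree n) (σ : Set (Fin n)) : ℝ :=
  T.steiner (insert (T.leaf 0) ((fun i => T.leaf i.succ) '' σ))

end MetricTree

/-- The (unordered) degree of a vertex. -/
noncomputable def MetricTree.deg {n : ℕ} (T : MetricTree n) (v : T.V) : ℕ :=
  (T.G.neighborSet v).ncard

/-- Isomorphism of metric trees: a bijection of vertices preserving adjacency,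
edge lengths and the leaf labelling. -/
def MetricTree.Isom {n : ℕ} (T₁ T₂ : MetricTree n) : Prop :=
  ∃ φ : T₁.V ≃ T₂.V,
    (∀ a b, T₁.G.Adj a b ↔ T₂.G.Adj (φ a) (φ b)) ∧
    (∀ a b, T₁.G.Adj a b → T₁.len s(a, b) = T₂.len s(φ a, φ b)) ∧
    (∀ i, φ (T₁.leaf i) = T₂.leaf i)

namespace SimpleGraph.Walk

variable {V : Type*} {G : SimpleGraph V}

lemma IsPath.append {u v w : V} {p : G.Walk u v} {q : G.Walk v w} (hp : p.IsPath)
    (hq : q.IsPath) (h : ∀ x ∈ p.support, x ∈ q.support → x = v) : (p.append q).IsPath := by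
  rw [isPath_def, support_append]
  have hq' := hq.support_nodup
  rw [← q.cons_tail_support, List.nodup_cons] at hq'
  refine hp.support_nodup.append hq'.2 fun x hxp hxq => ?_
  obtain rfl := h x hxp (q.cons_tail_support ▸ List.mem_cons_of_mem _ hxq)
  exact hq'.1 hxq

end SimpleGraph.Walk

namespace MetricTree

variable {n : ℕ} (T : MetricTree n)

lemma path_isPath (v w : T.V) : (T.path v w).IsPath :=
  (T.isTree.existsUnique_path v w).choose_spec.1

lemma eq_path {v w : T.V} {p : T.G.Walk v w} (hp : p.IsPath) : p = T.path v w :=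
  (T.isTree.existsUnique_path v w).choose_spec.2 p hp

lemma path_self (v : T.V) : T.path v v = .nil :=
  (T.eq_path .nil).symm

lemma path_reverse (v w : T.V) : (T.path v w).reverse = T.path w v :=
  T.eq_path (T.path_isPath v w).reverse

lemma path_adj {v w : T.V} (h : T.G.Adj v w) : T.path v w = h.toWalk :=
  (T.eq_path h.isPath_toWalk).symm

variable {T}

lemma mem_path_comm {a b x : T.V} : x ∈ (T.path a b).support ↔ x ∈ (T.path b a).support := by
  rw [← T.path_reverse a b, Walk.support_reverse, List.mem_reverse]

lemma path_takeUntil {a b c : T.V} (hc : c ∈ (T.path a b).support) :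
    (T.path a b).takeUntil c hc = T.path a c :=
  T.eq_path ((T.path_isPath a b).takeUntil hc)

lemma path_dropUntil {a b c : T.V} (hc : c ∈ (T.path a b).support) :
    (T.path a b).dropUntil c hc = T.path c b :=
  T.eq_path ((T.path_isPath a b).dropUntil hc)

lemma path_append_of_mem {a b c : T.V} (hc : c ∈ (T.path a b).support) :
    (T.path a c).append (T.path c b) = T.path a b := by
  rw [← path_takeUntil hc, ← path_dropUntil hc, Walk.take_spec]

lemma support_path_subset {a b c : T.V} (hc : c ∈ (T.path a b).support) :
    (T.path a c).support ⊆ (T.path a b).support := by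
  rw [← path_takeUntil hc]
  exact (T.path a b).support_takeUntil_subset_support hc

lemma mem_path_or_mem_path {a b x y : T.V} (hx : x ∈ (T.path a b).support)
    (hy : y ∈ (T.path a b).support) :
    y ∈ (T.path a x).support ∨ y ∈ (T.path x b).support := by
  rwa [← path_append_of_mem hx, Walk.mem_support_append_iff] at hy

lemma mem_path_of_inter {a b c : T.V}
    (h : ∀ x ∈ (T.path a b).support, x ∈ (T.path b c).support → x = b) :
    b ∈ (T.path a c).support := by
  rw [← T.eq_path ((T.path_isPath a b).append (T.path_isPath b c) h)]
  exact Walk.mem_support_append_iff _ _ |>.2 (.inl (T.path a b).end_mem_support)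

lemma length_path_add_of_mem {a b c : T.V} (hc : c ∈ (T.path a b).support) :
    (T.path a c).length + (T.path c b).length = (T.path a b).length := by
  rw [← Walk.length_append, path_append_of_mem hc]

/-- The median of `a, b, c` is the vertex of the path from `b` to `c` nearest to `a`. -/
lemma exists_median (a b c : T.V) :
    ∃ m, m ∈ (T.path a b).support ∧ m ∈ (T.path a c).support ∧ m ∈ (T.path b c).support := by
  obtain ⟨m, hm, hmin⟩ := (T.path b c).support.toFinset.exists_min_image
    (fun x => (T.path a x).length) ⟨b, by simp⟩
  rw [List.mem_toFinset] at hm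
  have hinter : ∀ x ∈ (T.path a m).support, x ∈ (T.path b c).support → x = m := by
    intro x hxa hxbc
    have := length_path_add_of_mem hxa
    have := hmin x (List.mem_toFinset.2 hxbc)
    exact Walk.eq_of_length_eq_zero (p := T.path x m) (by omega)
  refine ⟨m, mem_path_of_inter fun x hxa hxb => hinter x hxa ?_,
    mem_path_of_inter fun x hxa hxc => hinter x hxa ?_, hm⟩
  · exact support_path_subset hm (mem_path_comm.1 hxb)
  · rw [← path_dropUntil hm] at hxc
    exact (T.path b c).support_dropUntil_subset_support hm hxc

lemma eq_snd_of_adj {v z w : T.V} (hadj : T.G.Adj v w) (hw : w ∈ (T.path v z).support) :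
    w = (T.path v z).snd :=
  T.isTree.isAcyclic.eq_snd_of_adj_start (T.path_isPath v z) hadj hw

lemma snd_mem_path_of_mem {v z x : T.V} (hx : x ∈ (T.path v z).support) (hxv : x ≠ v) :
    (T.path v z).snd ∈ (T.path v x).support := by
  rw [← Walk.snd_takeUntil hxv _ hx, path_takeUntil hx]
  exact Walk.getVert_mem_support _ 1

lemma mem_path_of_adj {v y z w : T.V} (hadj : T.G.Adj v w)
    (hwy : w ∉ (T.path v y).support) (hwz : w ∈ (T.path v z).support) :
    v ∈ (T.path y z).support := by
  obtain ⟨m, hmvy, hmvz, hmyz⟩ := exists_median v y z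
  obtain rfl | hmv := eq_or_ne m v
  · exact hmyz
  have := support_path_subset hmvy (snd_mem_path_of_mem hmvz hmv)
  exact absurd (eq_snd_of_adj hadj hwz ▸ this) hwy

lemma two_le_deg_of_ne_leaf (hleaf : ∀ v, T.deg v = 1 → ∃ i, v = T.leaf i) {v : T.V}
    (hv : ∀ i, v ≠ T.leaf i) : 2 ≤ T.deg v := by
  obtain ⟨w, hadj, -⟩ := Walk.exists_eq_cons_of_ne (hv 0) (T.path v (T.leaf 0))
  have : T.deg v ≠ 0 := (Set.ncard_pos (Set.toFinite _)).2 ⟨w, hadj⟩ |>.ne'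
  have : T.deg v ≠ 1 := fun h => absurd (hleaf v h) (by simpa using hv)
  omega

lemma exists_adj_ne_ne {v : T.V} (hv : 2 < T.deg v) (a b : T.V) :
    ∃ w, T.G.Adj v w ∧ w ≠ a ∧ w ≠ b := by
  have := (T.G.neighborSet v).pred_ncard_le_ncard_sdiff_singleton a
  obtain ⟨w, ⟨hadj, hwa⟩, hwb⟩ :=
    Set.exists_ne_of_one_lt_ncard (s := T.G.neighborSet v \ {a}) (by unfold deg at hv; omega) b
  exact ⟨w, hadj, hwa, hwb⟩

/-- A vertex farthest from `v` (in the number of edges) among those behind `u` is a leaf. -/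
lemma exists_leaf_mem_path (hleaf : ∀ v, T.deg v = 1 → ∃ i, v = T.leaf i) (u v : T.V) :
    ∃ i, u ∈ (T.path (T.leaf i) v).support := by
  classical
  obtain ⟨x, hx, hmax⟩ := (Finset.univ.filter fun x => u ∈ (T.path x v).support).exists_max_image
    (fun x => (T.path x v).length) ⟨u, by simp⟩
  simp only [Finset.mem_filter, Finset.mem_univ, true_and] at hx hmax
  by_contra! hnot
  have hxleaf : ∀ i, x ≠ T.leaf i := by rintro i rfl; exact hnot i hx
  obtain ⟨w, hadj, hw⟩ := Set.exists_ne_of_one_lt_ncard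
    (two_le_deg_of_ne_leaf hleaf hxleaf) (T.path x v).snd
  have hwx : w ∉ (T.path x v).support := fun h => hw (eq_snd_of_adj hadj h)
  have hpath := T.eq_path ((T.path_isPath x v).cons hwx (h := hadj.symm))
  have := hmax w (hpath ▸ List.mem_cons_of_mem _ hx)
  rw [← hpath, Walk.length_cons] at this
  omega

lemma exists_median_leaves (hdeg : ∀ v, T.deg v ≠ 2)
    (hleaf : ∀ v, T.deg v = 1 → ∃ i, v = T.leaf i) (v : T.V) :
    ∃ i j k, v ∈ (T.path (T.leaf i) (T.leaf j)).support ∧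
      v ∈ (T.path (T.leaf i) (T.leaf k)).support ∧ v ∈ (T.path (T.leaf j) (T.leaf k)).support := by
  obtain ⟨i, hi⟩ := exists_leaf_mem_path hleaf v (T.leaf 0)
  by_cases hvleaf : ∃ t, v = T.leaf t
  · obtain ⟨t, rfl⟩ := hvleaf
    exact ⟨i, 0, t, hi, Walk.end_mem_support _, Walk.end_mem_support _⟩
  push Not at hvleaf
  obtain ⟨w, hadj, hwi, hw0⟩ := exists_adj_ne_ne (v := v)
    (by have := two_le_deg_of_ne_leaf hleaf hvleaf; have := hdeg v; omega)
    (T.path v (T.leaf i)).snd (T.path v (T.leaf 0)).snd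
  obtain ⟨k, hk⟩ := exists_leaf_mem_path hleaf w v
  have hwk := mem_path_comm.1 hk
  exact ⟨i, 0, k, hi, mem_path_of_adj hadj (fun h => hwi (eq_snd_of_adj hadj h)) hwk,
    mem_path_of_adj hadj (fun h => hw0 (eq_snd_of_adj hadj h)) hwk⟩

variable (T)

lemma dist_eq_sum (a b : T.V) : T.dist a b = ((T.path a b).edges.map T.len).sum := by
  classical
  have h : T.hullEdges {a, b} = (T.path a b).edges.toFinset := by
    ext e
    simp only [hullEdges, Finset.mem_filter, Finset.mem_univ, true_and, List.mem_toFinset,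
      Set.mem_insert_iff, Set.mem_singleton_iff, exists_eq_or_imp, exists_eq_left, path_self,
      Walk.edges_nil, List.not_mem_nil, false_or, or_false]
    rw [← T.path_reverse a b, Walk.edges_reverse, List.mem_reverse, or_self]
  rw [dist, steiner, h]
  exact List.sum_toFinset T.len (T.path_isPath a b).isTrail.edges_nodup

lemma dist_self (a : T.V) : T.dist a a = 0 := by
  simp [dist_eq_sum, path_self]

lemma dist_comm (a b : T.V) : T.dist a b = T.dist b a := by
  rw [dist_eq_sum, dist_eq_sum, ← T.path_reverse b a, Walk.edges_reverse,
    List.map_reverse, List.sum_reverse]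

lemma dist_nonneg (a b : T.V) : 0 ≤ T.dist a b := by
  rw [dist_eq_sum]
  exact List.sum_nonneg (by simp [T.len_nonneg])

lemma dist_of_adj {u v : T.V} (h : T.G.Adj u v) : T.dist u v = T.len s(u, v) := by
  simp [dist_eq_sum, T.path_adj h]

variable {T}

lemma dist_add_of_mem {a b c : T.V} (hc : c ∈ (T.path a b).support) :
    T.dist a c + T.dist c b = T.dist a b := by
  rw [dist_eq_sum, dist_eq_sum, dist_eq_sum, ← path_append_of_mem hc,
    Walk.edges_append, List.map_append, List.sum_append]

lemma dist_triangle (a b c : T.V) : T.dist a b ≤ T.dist a c + T.dist c b := by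
  obtain ⟨m, hab, hac, hbc⟩ := exists_median a b c
  have := dist_add_of_mem hab
  have := dist_add_of_mem hac
  have := dist_add_of_mem (mem_path_comm.1 hbc)
  linarith [T.dist_nonneg c m, T.dist_nonneg m c]

lemma dist_pos (hpos : ∀ e ∈ T.G.edgeSet, 0 < T.len e) {a b : T.V} (hab : a ≠ b) :
    0 < T.dist a b := by
  obtain ⟨w, hadj, q, hq⟩ := Walk.exists_eq_cons_of_ne hab (T.path a b)
  rw [dist_eq_sum, hq, Walk.edges_cons, List.map_cons, List.sum_cons]
  exact add_pos_of_pos_of_nonneg (hpos _ hadj) (List.sum_nonneg (by simp [T.len_nonneg]))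

lemma dist_eq_zero_iff (hpos : ∀ e ∈ T.G.edgeSet, 0 < T.len e) {a b : T.V} :
    T.dist a b = 0 ↔ a = b := by
  refine ⟨fun h => by_contra fun hab => (dist_pos hpos hab).ne' h, ?_⟩
  rintro rfl
  exact T.dist_self a

lemma mem_path_of_dist_add_eq (hpos : ∀ e ∈ T.G.edgeSet, 0 < T.len e) {a b c : T.V}
    (h : T.dist a c + T.dist c b = T.dist a b) : c ∈ (T.path a b).support := by
  obtain ⟨m, hab, hac, hbc⟩ := exists_median a b c
  have := dist_add_of_mem hab
  have := dist_add_of_mem hac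
  have := dist_add_of_mem (mem_path_comm.1 hbc)
  have hmc : T.dist m c = 0 := by linarith [T.dist_nonneg c m, T.dist_nonneg m c]
  rwa [← (dist_eq_zero_iff hpos).1 hmc]

lemma adj_iff_forall_dist_add_eq (hpos : ∀ e ∈ T.G.edgeSet, 0 < T.len e) {u v : T.V} :
    T.G.Adj u v ↔ u ≠ v ∧ ∀ w, T.dist u w + T.dist w v = T.dist u v → w = u ∨ w = v := by
  constructor
  · intro h
    refine ⟨h.ne, fun w hw => ?_⟩
    simpa [T.path_adj h] using mem_path_of_dist_add_eq hpos hw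
  · rintro ⟨huv, hw⟩
    have hnil := Walk.not_nil_of_ne (p := T.path u v) huv
    have hadj := Walk.adj_snd hnil
    rcases hw _ (dist_add_of_mem (Walk.getVert_mem_support _ 1)) with h | h
    · exact absurd h hadj.ne'
    · exact h ▸ hadj

lemma dist_eq_abs_sub_of_mem {a b x y : T.V} (hx : x ∈ (T.path a b).support)
    (hy : y ∈ (T.path a b).support) : T.dist x y = |T.dist a y - T.dist a x| := by
  have := dist_add_of_mem hx
  have := dist_add_of_mem hy
  rcases mem_path_or_mem_path hx hy with h | h
  · have := dist_add_of_mem h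
    rw [abs_sub_comm, abs_of_nonneg (by linarith [T.dist_nonneg y x]), T.dist_comm]
    linarith
  · have := dist_add_of_mem h
    rw [abs_of_nonneg (by linarith [T.dist_nonneg x y])]
    linarith

lemma dist_median_left {a b c m : T.V} (hab : m ∈ (T.path a b).support)
    (hac : m ∈ (T.path a c).support) (hbc : m ∈ (T.path b c).support) :
    T.dist a m = (T.dist a b + T.dist a c - T.dist b c) / 2 := by
  have := dist_add_of_mem hab
  have := dist_add_of_mem hac
  have := dist_add_of_mem hbc
  linarith [T.dist_comm b m]

/-- The median `p` of `a, b, x` is the projection of `x` onto the path from `a` to `b`. -/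
lemma dist_eq_add_of_median {a b x p m : T.V} (hpab : p ∈ (T.path a b).support)
    (hpax : p ∈ (T.path a x).support) (hpbx : p ∈ (T.path b x).support)
    (hm : m ∈ (T.path a b).support) : T.dist x m = T.dist x p + T.dist p m := by
  refine le_antisymm (T.dist_triangle x m p) ?_
  have := T.dist_comm x p
  have := T.dist_comm x m
  rcases mem_path_or_mem_path hpab hm with h | h
  · have := dist_add_of_mem h
    have := dist_add_of_mem hpax
    linarith [T.dist_triangle a x m, T.dist_comm m p]
  · have := dist_add_of_mem h
    have := dist_add_of_mem hpbx
    linarith [T.dist_triangle b x m, T.dist_comm b p, T.dist_comm b m]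

lemma dist_median {a b c m : T.V} (hab : m ∈ (T.path a b).support)
    (hac : m ∈ (T.path a c).support) (hbc : m ∈ (T.path b c).support) (x : T.V) :
    T.dist x m = (T.dist x a + T.dist x b - T.dist a b) / 2 +
      |(T.dist a b + T.dist a c - T.dist b c) / 2 -
        (T.dist a b + T.dist x a - T.dist x b) / 2| := by
  obtain ⟨p, hpab, hpax, hpbx⟩ := exists_median a b x
  rw [dist_eq_add_of_median hpab hpax hpbx hab, dist_eq_abs_sub_of_mem hpab hab,
    dist_median_left (mem_path_comm.1 hpax) (mem_path_comm.1 hpbx) hpab,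
    dist_median_left hab hac hbc, dist_median_left hpab hpax hpbx, T.dist_comm a x,
    T.dist_comm b x]

lemma dist_median_congr {T' : MetricTree n} {a b c m x : T.V} {a' b' c' m' x' : T'.V}
    (hab : m ∈ (T.path a b).support) (hac : m ∈ (T.path a c).support)
    (hbc : m ∈ (T.path b c).support) (hab' : m' ∈ (T'.path a' b').support)
    (hac' : m' ∈ (T'.path a' c').support) (hbc' : m' ∈ (T'.path b' c').support)
    (dab : T.dist a b = T'.dist a' b') (dac : T.dist a c = T'.dist a' c')
    (dbc : T.dist b c = T'.dist b' c') (dxa : T.dist x a = T'.dist x' a')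
    (dxb : T.dist x b = T'.dist x' b') : T.dist x m = T'.dist x' m' := by
  rw [dist_median hab hac hbc, dist_median hab' hac' hbc', dab, dac, dbc, dxa, dxb]

variable {T' : MetricTree n}

lemma injective_of_dist_eq (hpos : ∀ e ∈ T.G.edgeSet, 0 < T.len e) {φ : T.V → T'.V}
    (hφ : ∀ u v, T.dist u v = T'.dist (φ u) (φ v)) : Function.Injective φ := fun u v h => by
  rw [← dist_eq_zero_iff hpos, hφ, h, dist_self]

lemma isom_of_dist_eq (hpos : ∀ e ∈ T.G.edgeSet, 0 < T.len e)
    (hpos' : ∀ e ∈ T'.G.edgeSet, 0 < T'.len e) (φ : T.V ≃ T'.V)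
    (hφ : ∀ u v, T.dist u v = T'.dist (φ u) (φ v)) (hleaf : ∀ i, φ (T.leaf i) = T'.leaf i) :
    T.Isom T' := by
  have hadj : ∀ a b, T.G.Adj a b ↔ T'.G.Adj (φ a) (φ b) := by
    intro a b
    rw [adj_iff_forall_dist_add_eq hpos, adj_iff_forall_dist_add_eq hpos', φ.injective.ne_iff,
      ← φ.forall_congr_right]
    simp only [hφ, φ.injective.eq_iff]
  refine ⟨φ, hadj, fun a b h => ?_, hleaf⟩
  rw [← dist_of_adj T h, ← dist_of_adj T' ((hadj a b).1 h), hφ]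

/-- Send each vertex, written as the median of three leaves of `T`, to the median of the same
three leaves of `T'`. -/
lemma exists_dist_eq_map (hdeg : ∀ v, T.deg v ≠ 2)
    (hleaf : ∀ v, T.deg v = 1 → ∃ i, v = T.leaf i) (hpos' : ∀ e ∈ T'.G.edgeSet, 0 < T'.len e)
    (hdist : ∀ i j, T.dist (T.leaf i) (T.leaf j) = T'.dist (T'.leaf i) (T'.leaf j)) :
    ∃ φ : T.V → T'.V, (∀ u v, T.dist u v = T'.dist (φ u) (φ v)) ∧
      ∀ i, φ (T.leaf i) = T'.leaf i := by
  choose i j k hij hik hjk using exists_median_leaves hdeg hleaf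
  choose φ hij' hik' hjk' using fun v => exists_median (T'.leaf (i v)) (T'.leaf (j v))
    (T'.leaf (k v))
  have hφleaf : ∀ v l, T.dist v (T.leaf l) = T'.dist (φ v) (T'.leaf l) := fun v l => by
    rw [T.dist_comm, T'.dist_comm]
    exact dist_median_congr (hij v) (hik v) (hjk v) (hij' v) (hik' v) (hjk' v)
      (hdist _ _) (hdist _ _) (hdist _ _) (hdist _ _) (hdist _ _)
  refine ⟨φ, fun u v => ?_, fun l => ?_⟩
  · exact dist_median_congr (hij v) (hik v) (hjk v) (hij' v) (hik' v) (hjk' v)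
      (hdist _ _) (hdist _ _) (hdist _ _) (hφleaf u _) (hφleaf u _)
  · rw [← dist_eq_zero_iff hpos', ← hφleaf, dist_self]

end MetricTree

theorem stmt2_general {n : ℕ} (T₁ T₂ : MetricTree n)
    (hpos₁ : ∀ e ∈ T₁.G.edgeSet, 0 < T₁.len e)
    (hpos₂ : ∀ e ∈ T₂.G.edgeSet, 0 < T₂.len e)
    (hdeg₁ : ∀ v, T₁.deg v ≠ 2) (hdeg₂ : ∀ v, T₂.deg v ≠ 2)
    (hleaf₁ : ∀ v, T₁.deg v = 1 ↔ ∃ i, v = T₁.leaf i)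
    (hleaf₂ : ∀ v, T₂.deg v = 1 ↔ ∃ i, v = T₂.leaf i)
    (hdist : ∀ i j, T₁.dist (T₁.leaf i) (T₁.leaf j) = T₂.dist (T₂.leaf i) (T₂.leaf j)) :
    T₁.Isom T₂ := by
  obtain ⟨φ, hφ, hφleaf⟩ :=
    MetricTree.exists_dist_eq_map hdeg₁ (fun v => (hleaf₁ v).1) hpos₂ hdist
  obtain ⟨ψ, hψ, -⟩ :=
    MetricTree.exists_dist_eq_map hdeg₂ (fun v => (hleaf₂ v).1) hpos₁ fun i j => (hdist i j).symm
  have hφinj := MetricTree.injective_of_dist_eq hpos₁ hφ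
  have hψinj := MetricTree.injective_of_dist_eq hpos₂ hψ
  have hφbij : φ.Bijective := (Fintype.bijective_iff_injective_and_card φ).2
    ⟨hφinj, (Fintype.card_le_of_injective φ hφinj).antisymm (Fintype.card_le_of_injective ψ hψinj)⟩
  exact MetricTree.isom_of_dist_eq hpos₁ hpos₂ (Equiv.ofBijective φ hφbij) hφ hφleaf

/-- two metric trees with the same leaf set (at least 3 leaves), strictly
positive edge lengths, no degree-2 vertices, whose degree-one vertices are exactly the
labelled leaves, and which induce the same pairwise leaf distances, are isomorphic. -/
theorem stmt2 {n : ℕ} (hn : 2 ≤ n) (T₁ T₂ : MetricTree n)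
    (hpos₁ : ∀ e ∈ T₁.G.edgeSet, 0 < T₁.len e)
    (hpos₂ : ∀ e ∈ T₂.G.edgeSet, 0 < T₂.len e)
    (hdeg₁ : ∀ v, T₁.deg v ≠ 2) (hdeg₂ : ∀ v, T₂.deg v ≠ 2)
    (hleaf₁ : ∀ v, T₁.deg v = 1 ↔ ∃ i, v = T₁.leaf i)
    (hleaf₂ : ∀ v, T₂.deg v = 1 ↔ ∃ i, v = T₂.leaf i)
    (hdist : ∀ i j, T₁.dist (T₁.leaf i) (T₁.leaf j) = T₂.dist (T₂.leaf i) (T₂.leaf j)) :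
    T₁.Isom T₂ :=
  stmt2_general T₁ T₂ hpos₁ hpos₂ hdeg₁ hdeg₂ hleaf₁ hleaf₂ hdist
end

section
/- Let v : A → ℝ ∪ {−∞} be a valuation on a commutative ring A (i.e., v(fg) = v(f)+v(g), v(f+g) ≤ max(v(f), v(g)), v(0) = −∞), let x_1,...,x_N ∈ A, and let f = Σ_m c_m x^m be a polynomial in N variables vanishing when evaluated at (x_1,...,x_N). If at least two monomials of f have nonzero coefficient and all v(x_i) are finite, then the maximum of the linear forms Σ_i m_i · v(x_i), over monomials m appearing in f, is attained by at least two distinct monomials; i.e., (v(x_1),...,v(x_N)) lies in the tropical hypersurface of f. -/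
open MvPolynomial

/-- if `v` is a valuation on a commutative ℝ-algebra `A` with values in the
tropical line `ℝ ∪ {−∞}`, trivial on nonzero scalars, `x : Fin N → A`, and `f` is a
polynomial with at least two monomials which vanishes at `x`, and all `v (x i)` are
finite, then the maximum of the tropicalized monomials `Σ_i m_i · v(x_i)` over the
support of `f` is attained by at least two distinct monomials: the point
`(v x₁, …, v x_N)` lies in the tropical hypersurface of `f`. -/
theorem stmt3 {A : Type*} [CommRing A] [Algebra ℝ A] (v : A → WithBot ℝ)
    (hmul : ∀ f g : A, v (f * g) = v f + v g)
    (hadd : ∀ f g : A, v (f + g) ≤ max (v f) (v g))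
    (hzero : v 0 = ⊥) (hone : v 1 = 0)
    (hscal : ∀ c : ℝ, c ≠ 0 → v (algebraMap ℝ A c) = 0)
    {N : ℕ} (x : Fin N → A) (t : Fin N → ℝ) (hfin : ∀ i, v (x i) = (t i : WithBot ℝ))
    (f : MvPolynomial (Fin N) ℝ) (hvanish : MvPolynomial.aeval x f = 0)
    (hsupp : 2 ≤ f.support.card) :
    ∃ m₁ ∈ f.support, ∃ m₂ ∈ f.support, m₁ ≠ m₂ ∧
      (∑ i, (m₁ i : ℝ) * t i) = (∑ i, (m₂ i : ℝ) * t i) ∧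
      ∀ m ∈ f.support, (∑ i, (m i : ℝ) * t i) ≤ ∑ i, (m₁ i : ℝ) * t i := by
  classical
  set W : (Fin N →₀ ℕ) → ℝ := fun m => ∑ i, (m i : ℝ) * t i with hW
  -- v of powers
  have hvpow : ∀ (i : Fin N) (k : ℕ), v (x i ^ k) = (((k : ℝ) * t i : ℝ) : WithBot ℝ) := by
    intro i k
    induction k with
    | zero => simpa using hone
    | succ k ih =>
      rw [pow_succ, hmul, ih, hfin, ← WithBot.coe_add]
      exact congrArg _ (by push_cast; ring)
  -- v of monomials
  have hvmon : ∀ m : Fin N →₀ ℕ, v (∏ i, x i ^ m i) = ((W m : ℝ) : WithBot ℝ) := by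
    intro m
    have : ∀ s : Finset (Fin N),
        v (∏ i ∈ s, x i ^ m i) = ((∑ i ∈ s, (m i : ℝ) * t i : ℝ) : WithBot ℝ) := by
      intro s
      induction s using Finset.cons_induction with
      | empty => simpa using hone
      | cons a s ha ih =>
        rw [Finset.prod_cons, Finset.sum_cons, hmul, hvpow, ih, ← WithBot.coe_add]
    exact this Finset.univ
  -- v of a term
  have hterm : ∀ m ∈ f.support,
      v (algebraMap ℝ A (f.coeff m) * ∏ i, x i ^ m i) = ((W m : ℝ) : WithBot ℝ) := by
    intro m hm
    rw [hmul, hscal _ (MvPolynomial.mem_support_iff.mp hm), hvmon, zero_add]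
  -- v of negation
  have hneg : ∀ a : A, v (-a) = v a := by
    intro a
    have h1 : (-a) = algebraMap ℝ A (-1) * a := by
      simp [neg_one_mul]
    rw [h1, hmul, hscal (-1) (by norm_num), zero_add]
  -- v of a finite sum
  have hsum : ∀ (s : Finset (Fin N →₀ ℕ)) (F : (Fin N →₀ ℕ) → A) (b : WithBot ℝ),
      (∀ m ∈ s, v (F m) ≤ b) → v (∑ m ∈ s, F m) ≤ b := by
    intro s
    induction s using Finset.cons_induction with
    | empty => intro F b _; simp [hzero]
    | cons a s ha ih =>
      intro F b hb
      rw [Finset.sum_cons]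
      exact le_trans (hadd _ _)
        (max_le (hb a (by simp)) (ih F b fun m hm => hb m (by simp [hm])))
  have hne : f.support.Nonempty := Finset.card_pos.mp (by omega)
  obtain ⟨m₁, hm₁, hmax⟩ := f.support.exists_max_image W hne
  have hSne : (f.support.erase m₁).Nonempty := by
    rw [← Finset.card_pos, Finset.card_erase_of_mem hm₁]
    omega
  obtain ⟨m₂, hm₂, hmax₂⟩ := (f.support.erase m₁).exists_max_image W hSne
  have hm₂' : m₂ ∈ f.support := Finset.mem_of_mem_erase hm₂
  have hm₂ne : m₂ ≠ m₁ := Finset.ne_of_mem_erase hm₂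
  -- the key equality W m₁ = W m₂
  have hle : W m₂ ≤ W m₁ := hmax m₂ hm₂'
  have heq : W m₁ = W m₂ := by
    by_contra hlt'
    have hlt : W m₂ < W m₁ := lt_of_le_of_ne hle (fun h => hlt' h.symm)
    -- expand the vanishing
    have hexp : ∑ m ∈ f.support, algebraMap ℝ A (f.coeff m) * ∏ i, x i ^ m i = 0 := by
      rw [← MvPolynomial.eval₂_eq' (algebraMap ℝ A) x f, ← MvPolynomial.aeval_def, hvanish]
    rw [← Finset.add_sum_erase _ _ hm₁] at hexp
    have hterm₁ : algebraMap ℝ A (f.coeff m₁) * ∏ i, x i ^ m₁ i =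
        -(∑ m ∈ f.support.erase m₁, algebraMap ℝ A (f.coeff m) * ∏ i, x i ^ m i) :=
      eq_neg_of_add_eq_zero_left hexp
    have hbound : v (algebraMap ℝ A (f.coeff m₁) * ∏ i, x i ^ m₁ i)
        ≤ ((W m₂ : ℝ) : WithBot ℝ) := by
      rw [hterm₁, hneg]
      apply hsum
      intro m hm
      rw [hterm m (Finset.mem_of_mem_erase hm)]
      exact_mod_cast hmax₂ m hm
    rw [hterm m₁ hm₁] at hbound
    exact absurd (WithBot.coe_le_coe.mp hbound) (not_le.mpr hlt)
  exact ⟨m₁, hm₁, m₂, hm₂', fun h => hm₂ne h.symm, heq, hmax⟩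
end

section
/- Let T be a metric tree with leaves 0,1,...,n. The function w : subsets of {1,...,n} → ℝ given by w(σ) = d_{0,σ}(T) is submodular: for all subsets σ, τ, d_{0,σ∪τ} + d_{0,σ∩τ} ≤ d_{0,σ} + d_{0,τ}. -/
open SimpleGraph Finset

namespace MetricTree

variable {n : ℕ}

lemma path_edges_subset (T : MetricTree n) {a b : T.V} (w : T.G.Walk a b) :
    (T.path a b).edges ⊆ w.edges := by
  have h := (T.isTree.existsUnique_path a b).choose_spec
  have heq : w.bypass = T.path a b := h.2 w.bypass w.bypass_isPath
  rw [← heq]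
  exact w.edges_bypass_subset

lemma mem_hullEdges (T : MetricTree n) {S : Set T.V} {e : Sym2 T.V} :
    e ∈ T.hullEdges S ↔ ∃ a ∈ S, ∃ b ∈ S, e ∈ (T.path a b).edges := by
  classical
  simp [hullEdges]

lemma hullEdges_mono (T : MetricTree n) {S S' : Set T.V} (h : S ⊆ S') :
    T.hullEdges S ⊆ T.hullEdges S' := by
  intro e he
  rw [T.mem_hullEdges] at he ⊢
  obtain ⟨a, ha, b, hb, hab⟩ := he
  exact ⟨a, h ha, b, h hb, hab⟩

lemma mem_path_trans (T : MetricTree n) {a b : T.V} (x : T.V) {e : Sym2 T.V}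
    (h : e ∈ (T.path a b).edges) :
    e ∈ (T.path a x).edges ∨ e ∈ (T.path x b).edges := by
  have := T.path_edges_subset ((T.path a x).append (T.path x b)) h
  rw [SimpleGraph.Walk.edges_append, List.mem_append] at this
  exact this

lemma hullEdges_union_subset (T : MetricTree n) {A B : Set T.V} {x : T.V}
    (hxA : x ∈ A) (hxB : x ∈ B) :
    T.hullEdges (A ∪ B) ⊆ T.hullEdges A ∪ T.hullEdges B := by
  intro e he
  rw [T.mem_hullEdges] at he
  obtain ⟨a, ha, b, hb, hab⟩ := he
  rw [Finset.mem_union, T.mem_hullEdges, T.mem_hullEdges]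
  rcases ha with ha | ha <;> rcases hb with hb | hb
  · exact Or.inl ⟨a, ha, b, hb, hab⟩
  · rcases T.mem_path_trans x hab with h | h
    · exact Or.inl ⟨a, ha, x, hxA, h⟩
    · exact Or.inr ⟨x, hxB, b, hb, h⟩
  · rcases T.mem_path_trans x hab with h | h
    · exact Or.inr ⟨a, ha, x, hxB, h⟩
    · exact Or.inl ⟨x, hxA, b, hb, h⟩
  · exact Or.inr ⟨a, ha, b, hb, hab⟩

end MetricTree

/-- the rooted Steiner tree length is submodular. -/
theorem stmt8 {n : ℕ} (T : MetricTree n) (σ τ : Set (Fin n)) :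
    T.d0 (σ ∪ τ) + T.d0 (σ ∩ τ) ≤ T.d0 σ + T.d0 τ := by
  classical
  set f : Fin n → T.V := fun i => T.leaf i.succ with hf
  have hfinj : Function.Injective f :=
    fun i j h => Fin.succ_injective _ (T.leaf_inj h)
  set A : Set T.V := insert (T.leaf 0) (f '' σ)
  set B : Set T.V := insert (T.leaf 0) (f '' τ)
  have hU : insert (T.leaf 0) (f '' (σ ∪ τ)) = A ∪ B := by
    simp only [A, B, Set.image_union, Set.insert_union_distrib]
  have hI : insert (T.leaf 0) (f '' (σ ∩ τ)) = A ∩ B := by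
    simp only [A, B, Set.image_inter hfinj, Set.insert_inter_distrib]
  have hx : T.leaf 0 ∈ A := Set.mem_insert _ _
  have hx' : T.leaf 0 ∈ B := Set.mem_insert _ _
  have hUsub : T.hullEdges (A ∪ B) ⊆ T.hullEdges A ∪ T.hullEdges B :=
    T.hullEdges_union_subset hx hx'
  have hIsub : T.hullEdges (A ∩ B) ⊆ T.hullEdges A ∩ T.hullEdges B := by
    rw [Finset.subset_inter_iff]
    exact ⟨T.hullEdges_mono Set.inter_subset_left,
      T.hullEdges_mono Set.inter_subset_right⟩
  have h1 : T.steiner (A ∪ B) ≤ ∑ e ∈ T.hullEdges A ∪ T.hullEdges B, T.len e :=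
    Finset.sum_le_sum_of_subset_of_nonneg hUsub (fun e _ _ => T.len_nonneg e)
  have h2 : T.steiner (A ∩ B) ≤ ∑ e ∈ T.hullEdges A ∩ T.hullEdges B, T.len e :=
    Finset.sum_le_sum_of_subset_of_nonneg hIsub (fun e _ _ => T.len_nonneg e)
  have key : (∑ e ∈ T.hullEdges A ∪ T.hullEdges B, T.len e) +
      ∑ e ∈ T.hullEdges A ∩ T.hullEdges B, T.len e =
      T.steiner A + T.steiner B := Finset.sum_union_inter
  unfold MetricTree.d0
  rw [hU, hI]
  linarith
end

section
/- Let T be a metric tree with leaves 0,...,n and w_T(σ) := d_{0,σ}(T) for σ ⊆ {1,...,n} nonempty. Extend w_T to monomials in the variables {z_σ} by w_T(z_{σ_1}⋯z_{σ_k}) = Σ w_T(σ_i). Then for the tropical 3-term Plücker relation in variables z_{ij} := z_{{i,j}} (for the Grassmannian Gr_2): among w_T(z_{ij}z_{kℓ}), w_T(z_{ik}z_{jℓ}), w_T(z_{iℓ}z_{jk}) the maximum is attained at least twice, for all distinct i,j,k,ℓ ∈ {1,...,n}. -/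
open SimpleGraph Finset

/-!
Each edge `e` of the tree contributes its length to `d_{0,{a,b}}` unless `a` and `b` both lie
on the side of `e` containing the root. Summing over edges, an edge contributes equally to the
three values unless it separates the four leaves into two pairs, in which case it contributes
less to the matching pairing than to the other two. In a tree no two edges separate the four
leaves into different pairings, so two of the pairings receive identical contributions edge by
edge and dominate the third.
-/

namespace SimpleGraph

variable {V : Type*} {G H : SimpleGraph V}

def SeparatesPairs (H : SimpleGraph V) (a b c d : V) : Prop :=
  H.Reachable a b ∧ H.Reachable c d ∧ ¬ H.Reachable a c

lemma separatesPairs_comm_right {a b c d : V} :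
    H.SeparatesPairs a b c d ↔ H.SeparatesPairs a b d c :=
  and_congr_right fun _ =>
    ⟨fun ⟨hcd, hac⟩ => ⟨hcd.symm, fun had => hac (had.trans hcd.symm)⟩,
      fun ⟨hdc, had⟩ => ⟨hdc.symm, fun hac => had (hac.trans hdc.symm)⟩⟩

lemma Reachable.deleteEdges_of_not_reachable {x y u : V} (hxy : H.Reachable x y)
    (hxu : ¬ H.Reachable x u) (v : V) : (H.deleteEdges {s(u, v)}).Reachable x y := by
  classical
  obtain ⟨p⟩ := hxy
  refine (p.toDeleteEdge _ fun he => hxu ?_).reachable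
  exact (p.takeUntil u (p.fst_mem_support_of_mem_edges he)).reachable

lemma Preconnected.reachable_deleteEdges_left_or_right (hG : G.Preconnected) (u v x : V) :
    (G.deleteEdges {s(u, v)}).Reachable x u ∨ (G.deleteEdges {s(u, v)}).Reachable x v := by
  obtain ⟨p⟩ := hG x u
  induction p with
  | nil => exact .inl .rfl
  | @cons x y u hxy p ih =>
    by_cases he : s(x, y) = s(u, v)
    · rcases Sym2.eq_iff.mp he with ⟨rfl, -⟩ | ⟨rfl, -⟩
      exacts [.inl .rfl, .inr .rfl]
    · have hxy' : (G.deleteEdges {s(u, v)}).Adj x y := by simp [hxy, he]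
      exact ih.imp hxy'.reachable.trans hxy'.reachable.trans

lemma Preconnected.reachable_or_reachable_or_reachable_deleteEdges (hG : G.Preconnected)
    (e : Sym2 V) (x y z : V) :
    (G.deleteEdges {e}).Reachable x y ∨ (G.deleteEdges {e}).Reachable y z ∨
      (G.deleteEdges {e}).Reachable x z := by
  induction e using Sym2.ind with
  | _ u v =>
    rcases hG.reachable_deleteEdges_left_or_right u v x with hx | hx <;>
    rcases hG.reachable_deleteEdges_left_or_right u v y with hy | hy <;>
    rcases hG.reachable_deleteEdges_left_or_right u v z with hz | hz <;>
    first
      | exact .inl (hx.trans hy.symm)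
      | exact .inr (.inl (hy.trans hz.symm))
      | exact .inr (.inr (hx.trans hz.symm))

lemma not_separatesPairs_deleteEdges (e e' : Sym2 V) {a b c d : V}
    (h : (G.deleteEdges {e}).SeparatesPairs a b c d) :
    ¬ (G.deleteEdges {e'}).SeparatesPairs a c b d := by
  -- the endpoints of `e'` lie on one side of `e`; the pair on the other side stays joined
  rintro ⟨hac', hbd', hab'⟩
  obtain ⟨hab, hcd, hac⟩ := h
  induction e' using Sym2.ind with
  | _ u v =>
  have hle : ((G.deleteEdges {e}).deleteEdges {s(u, v)}) ≤ G.deleteEdges {s(u, v)} :=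
    deleteEdges_mono (deleteEdges_le _)
  by_cases hcu : (G.deleteEdges {e}).Reachable c u
  · have hau : ¬ (G.deleteEdges {e}).Reachable a u := fun hau => hac (hau.trans hcu.symm)
    exact hab' ((hab.deleteEdges_of_not_reachable hau v).mono hle)
  · have hcd' := (hcd.deleteEdges_of_not_reachable hcu v).mono hle
    exact hab' ((hac'.trans hcd').trans hbd'.symm)

lemma IsAcyclic.mem_edges_iff_not_reachable (hG : G.IsAcyclic) {a b : V} {p : G.Walk a b}
    (hp : p.IsPath) (e : Sym2 V) : e ∈ p.edges ↔ ¬ (G.deleteEdges {e}).Reachable a b := by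
  refine ⟨fun he hab => ?_, fun hab => by_contra fun he => hab (p.toDeleteEdge e he).reachable⟩
  obtain ⟨q, hq⟩ := hab.exists_isPath
  have hpq : p = q.mapLe (deleteEdges_le _) :=
    congrArg Subtype.val ((hG.subsingleton_path a b).elim ⟨p, hp⟩ ⟨_, hq.mapLe _⟩)
  rw [hpq, Walk.edges_mapLe_eq_edges] at he
  simpa using q.edges_subset_edgeSet he

open scoped Classical in
/-- For `H = G - e` with `e` of length `c`: the contribution of `e` to the length of the hull
of `{r, p, q}`. -/
noncomputable def cutCost (H : SimpleGraph V) (r p q : V) (c : ℝ) : ℝ :=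
  if H.Reachable r p ∧ H.Reachable r q then 0 else c

lemma reachable_iff_of_two_classes
    (hH : ∀ x y z : V, H.Reachable x y ∨ H.Reachable y z ∨ H.Reachable x z) (r x y : V) :
    H.Reachable x y ↔ (H.Reachable r x ↔ H.Reachable r y) := by
  refine ⟨fun hxy => ⟨(·.trans hxy), (·.trans hxy.symm)⟩, fun hiff => ?_⟩
  by_cases hx : H.Reachable r x
  · exact hx.symm.trans (hiff.mp hx)
  · rcases hH r x y with h | h | h
    exacts [(hx h).elim, h, (hx (hiff.mpr h)).elim]

lemma cutCost_pairings
    (hH : ∀ x y z : V, H.Reachable x y ∨ H.Reachable y z ∨ H.Reachable x z)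
    {r a b c d : V} {len : ℝ} (hlen : 0 ≤ len)
    (hacbd : ¬ H.SeparatesPairs a c b d) (hadbc : ¬ H.SeparatesPairs a d b c) :
    H.cutCost r a c len + H.cutCost r b d len = H.cutCost r a d len + H.cutCost r b c len ∧
      H.cutCost r a b len + H.cutCost r c d len ≤ H.cutCost r a c len + H.cutCost r b d len := by
  have key := reachable_iff_of_two_classes hH r
  simp only [SeparatesPairs, key a b, key a c, key a d, key b c, key b d] at hacbd hadbc
  unfold cutCost
  by_cases ha : H.Reachable r a <;> by_cases hb : H.Reachable r b <;>
    by_cases hc : H.Reachable r c <;> by_cases hd : H.Reachable r d <;>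
    simp [ha, hb, hc, hd] at hacbd hadbc ⊢ <;> linarith

end SimpleGraph

namespace MetricTree

variable {n : ℕ} (T : MetricTree n)

def Splits (a b c d : T.V) : Prop :=
  ∃ e, (T.G.deleteEdges {e}).SeparatesPairs a b c d

variable {T}

lemma splits_comm_right {a b c d : T.V} : T.Splits a b c d ↔ T.Splits a b d c :=
  exists_congr fun _ => separatesPairs_comm_right

lemma Splits.not_splits {a b c d : T.V} (h : T.Splits a b c d) : ¬ T.Splits a c b d :=
  fun ⟨e', h'⟩ => h.elim fun e he => not_separatesPairs_deleteEdges e e' he h'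

variable (T)

lemma path_isPath_s18 (a b : T.V) : (T.path a b).IsPath :=
  (T.isTree.existsUnique_path a b).choose_spec.1

lemma mem_hullEdges_triple_iff (r p q : T.V) (e : Sym2 T.V) :
    e ∈ T.hullEdges {r, p, q} ↔
      ¬ ((T.G.deleteEdges {e}).Reachable r p ∧ (T.G.deleteEdges {e}).Reachable r q) := by
  simp only [hullEdges, mem_filter, mem_univ, true_and,
    T.isTree.isAcyclic.mem_edges_iff_not_reachable (T.path_isPath_s18 _ _)]
  constructor
  · rintro ⟨a, ha, b, hb, hab⟩ ⟨hp, hq⟩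
    have hr : ∀ x ∈ ({r, p, q} : Set T.V), (T.G.deleteEdges {e}).Reachable r x := by
      rintro x (rfl | rfl | rfl)
      exacts [.rfl, hp, hq]
    exact hab ((hr a ha).symm.trans (hr b hb))
  · intro h
    by_cases hp : (T.G.deleteEdges {e}).Reachable r p
    · exact ⟨r, by simp, q, by simp, fun hq => h ⟨hp, hq⟩⟩
    · exact ⟨r, by simp, p, by simp, hp⟩

lemma steiner_triple_eq_sum (r p q : T.V) :
    T.steiner {r, p, q} = ∑ e, (T.G.deleteEdges {e}).cutCost r p q (T.len e) := by
  classical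
  rw [steiner, ← univ_inter (T.hullEdges _), ← sum_ite_mem]
  refine sum_congr rfl fun e _ => ?_
  simp only [cutCost, mem_hullEdges_triple_iff, ite_not]
  congr

lemma steiner_pairings (r a b c d : T.V) (hacbd : ¬ T.Splits a c b d)
    (hadbc : ¬ T.Splits a d b c) :
    T.steiner {r, a, c} + T.steiner {r, b, d} = T.steiner {r, a, d} + T.steiner {r, b, c} ∧
      T.steiner {r, a, b} + T.steiner {r, c, d} ≤
        T.steiner {r, a, c} + T.steiner {r, b, d} := by
  simp only [steiner_triple_eq_sum, ← sum_add_distrib]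
  have hT := T.isTree.connected.preconnected
  have h e := cutCost_pairings (r := r) (hT.reachable_or_reachable_or_reachable_deleteEdges e)
    (T.len_nonneg e) (fun h => hacbd ⟨e, h⟩) (fun h => hadbc ⟨e, h⟩)
  exact ⟨sum_congr rfl fun e _ => (h e).1, sum_le_sum fun e _ => (h e).2⟩

end MetricTree

theorem stmt18_general {n : ℕ} (T : MetricTree n) (i j k l : Fin n) :
    let w : Fin n → Fin n → ℝ := fun a b => T.d0 {a, b}
    let x := w i j + w k l
    let y := w i k + w j l
    let z := w i l + w j k
    (x = y ∧ z ≤ x) ∨ (x = z ∧ y ≤ x) ∨ (y = z ∧ x ≤ y) := by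
  intro w x y z
  set L : Fin n → T.V := fun a => T.leaf a.succ
  set S : Fin n → Fin n → ℝ := fun a b => T.steiner {T.leaf 0, L a, L b}
  have hw : ∀ a b, w a b = S a b := fun a b => by simp [w, S, L, MetricTree.d0, Set.image_pair]
  have hS : ∀ a b, S a b = S b a := fun a b => by simp only [S, Set.pair_comm]
  simp only [x, y, z, hw]
  by_cases hA : T.Splits (L i) (L j) (L k) (L l)
  · exact .inr (.inr (T.steiner_pairings (T.leaf 0) _ _ _ _ hA.not_splits
      (MetricTree.splits_comm_right.mp hA).not_splits))
  by_cases hB : T.Splits (L i) (L k) (L j) (L l)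
  · obtain ⟨hxz, hyx⟩ : S i j + S k l = S i l + S k j ∧ S i k + S j l ≤ S i j + S k l :=
      T.steiner_pairings (T.leaf 0) _ _ _ _ hA (MetricTree.splits_comm_right.mp hB).not_splits
    rw [hS k j] at hxz
    exact .inr (.inl ⟨hxz, hyx⟩)
  · obtain ⟨hxy, hzx⟩ : S i j + S l k = S i k + S l j ∧ S i l + S j k ≤ S i j + S l k :=
      T.steiner_pairings (T.leaf 0) _ _ _ _
        (mt MetricTree.splits_comm_right.mpr hA) (mt MetricTree.splits_comm_right.mpr hB)
    rw [hS l k, hS l j] at hxy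
    rw [hS l k] at hzx
    exact .inl ⟨hxy, hzx⟩

/-- with w_T(z_{σ₁}⋯z_{σ_k}) = Σ d_{0,σ_i}, the tropicalized three-term
Plücker relation holds: among the three values of w_T on the quadratic monomials the
maximum is attained at least twice. -/
theorem stmt18 {n : ℕ} (T : MetricTree n) (i j k l : Fin n)
    (hij : i ≠ j) (hik : i ≠ k) (hil : i ≠ l) (hjk : j ≠ k) (hjl : j ≠ l) (hkl : k ≠ l) :
    let w : Fin n → Fin n → ℝ := fun a b => T.d0 {a, b}
    let x := w i j + w k l
    let y := w i k + w j l
    let z := w i l + w j k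
    (x = y ∧ z ≤ x) ∨ (x = z ∧ y ≤ x) ∨ (y = z ∧ x ≤ y) :=
  stmt18_general T i j k l
end
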